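/- Sufficient FKL reduction in bandits: for policies π_old, π_new on a finite action set with Boltzmann target B = B_τq, if KL(π_old‖B) + ∑_a B(a)log π_old(a) ≥ 0, FKL(π_new‖B) ≤ FKL(π_old‖B), and FKL(π_old‖B) − FKL(π_new‖B) ≥ FKL(π_old‖B) − (1/2)·((τ/‖q‖_∞)(KL(π_old‖B) + ∑_a B(a)log π_old(a)))², then KL(π_new‖B) ≤ KL(π_old‖B). -/

import Mathlib

open Finset

noncomputable def boltzmann {A : Type*} [Fintype A] (Q : A → ℝ) (τ : ℝ) (a : A) : ℝ :=
  Real.exp (Q a / τ) / ∑ b, Real.exp (Q b / τ)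

/-!
Let `B` be the Boltzmann policy and `M = ‖q‖_∞`. As `log B = q/τ - log Z`, for every policy `π`
`KL(π‖B) = ∑ π log π - ∑ B log B + ∑ (B - π) q/τ`. The entropy term `∑ π log π` is nonpositive,
Gibbs' inequality bounds `-∑ B log B` by the cross entropy `-∑ B log π_old`, and Hölder's
inequality followed by Pinsker's inequality `‖B - π‖₁ ≤ √(2 FKL(π‖B))` bounds the last term by
`(M/τ) √(2 FKL(π‖B))`. The assumed FKL reduction rearranges to
`(M/τ) √(2 FKL(π_new‖B)) ≤ KL(π_old‖B) + ∑ B log π_old`, which gives the claim.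
-/

open Real InformationTheory

lemma monotoneOn_add_one_mul_log_sub :
    MonotoneOn (fun t : ℝ => (t + 1) * log t - 2 * (t - 1)) (Set.Ioi 0) := by
  have hderiv : ∀ t ∈ Set.Ioi (0 : ℝ), HasDerivAt (fun t : ℝ => (t + 1) * log t - 2 * (t - 1))
      (1 * log t + (t + 1) * t⁻¹ - 2 * 1) t := fun t ht =>
    (((hasDerivAt_id t).add_const 1).mul (hasDerivAt_log (ne_of_gt ht))).sub
      (((hasDerivAt_id t).sub_const 1).const_mul 2)
  refine monotoneOn_of_deriv_nonneg (convex_Ioi 0)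
    (fun t ht => (hderiv t ht).continuousAt.continuousWithinAt) ?_ ?_
  · rw [interior_Ioi]
    exact fun t ht => (hderiv t ht).differentiableAt.differentiableWithinAt
  · rw [interior_Ioi]
    intro t ht
    have ht0 : t ≠ 0 := ne_of_gt ht
    rw [(hderiv t ht).deriv, show (t + 1) * t⁻¹ = 1 + t⁻¹ by field_simp]
    linarith [one_sub_inv_le_log_of_pos ht]

lemma two_mul_sub_one_le_add_one_mul_log {t : ℝ} (ht : 1 ≤ t) :
    2 * (t - 1) ≤ (t + 1) * log t := by
  have := monotoneOn_add_one_mul_log_sub (by norm_num : (1 : ℝ) ∈ Set.Ioi 0)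
    (Set.mem_Ioi.2 (by linarith)) ht
  simp only [log_one] at this
  linarith

lemma add_one_mul_log_le_two_mul_sub_one {t : ℝ} (h0 : 0 < t) (ht : t ≤ 1) :
    (t + 1) * log t ≤ 2 * (t - 1) := by
  have := monotoneOn_add_one_mul_log_sub h0 (by norm_num : (1 : ℝ) ∈ Set.Ioi 0) ht
  simp only [log_one] at this
  linarith

lemma three_mul_sq_sub_one_le_klFun {t : ℝ} (ht : 0 < t) :
    3 * (t - 1) ^ 2 ≤ (2 * t + 4) * klFun t := by
  set G : ℝ → ℝ := fun t => (2 * t + 4) * klFun t - 3 * (t - 1) ^ 2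
  have hderiv : ∀ x : ℝ, x ≠ 0 → HasDerivAt G (4 * ((x + 1) * log x - 2 * (x - 1))) x := by
    intro x hx
    refine ((((hasDerivAt_id x).const_mul 2).add_const 4).mul (hasDerivAt_klFun hx)).sub
      ((((hasDerivAt_id x).sub_const 1).pow 2).const_mul 3) |>.congr_deriv ?_
    simp only [klFun_apply, id, Nat.cast_ofNat]
    ring
  have hdiff : ∀ s : Set ℝ, 0 ∉ s → DifferentiableOn ℝ G s := fun s hs x hx =>
    (hderiv x (fun h => hs (h ▸ hx))).differentiableAt.differentiableWithinAt
  have hmin : IsMinOn G (Set.Ioi 0) 1 := by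
    refine isMinOn_Ioi_of_deriv (hderiv 1 one_ne_zero).continuousAt
      (hdiff _ (by simp)) (hdiff _ (by simp)) (fun x hx => ?_) (fun x hx => ?_)
    · rw [(hderiv x hx.1.ne').deriv]
      linarith [add_one_mul_log_le_two_mul_sub_one hx.1 hx.2.le]
    · rw [(hderiv x (by linarith [hx.out])).deriv]
      linarith [two_mul_sub_one_le_add_one_mul_log hx.out.le]
  have : G 1 ≤ G t := hmin (Set.mem_Ioi.2 ht)
  simp only [G, klFun_one] at this
  linarith

lemma three_mul_sq_sub_le_mul_klFun {p r : ℝ} (hp : 0 < p) (hr : 0 < r) :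
    3 * (p - r) ^ 2 ≤ (2 * p + 4 * r) * (r * klFun (p / r)) := by
  have h := mul_le_mul_of_nonneg_left (three_mul_sq_sub_one_le_klFun (div_pos hp hr))
    (sq_nonneg r)
  have hr0 : r ≠ 0 := hr.ne'
  calc 3 * (p - r) ^ 2 = r ^ 2 * (3 * (p / r - 1) ^ 2) := by field_simp
    _ ≤ r ^ 2 * ((2 * (p / r) + 4) * klFun (p / r)) := h
    _ = (2 * p + 4 * r) * (r * klFun (p / r)) := by field_simp

section DiscreteKL

variable {A : Type*} [Fintype A]

/-- `discreteKL p r` is `KL(p‖r)`; the paper's `FKL(π‖B)` is `discreteKL B π`. -/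
noncomputable def discreteKL (p r : A → ℝ) : ℝ := ∑ a, p a * log (p a / r a)

lemma discreteKL_eq_sum_klFun {p r : A → ℝ} (hr : ∀ a, r a ≠ 0) :
    discreteKL p r = ∑ a, r a * klFun (p a / r a) + ∑ a, p a - ∑ a, r a := by
  rw [discreteKL, ← sum_add_distrib, ← sum_sub_distrib]
  refine sum_congr rfl fun a _ => ?_
  have := hr a
  rw [klFun_apply]
  field_simp
  ring

lemma discreteKL_nonneg {p r : A → ℝ} (hp : ∀ a, 0 ≤ p a) (hr : ∀ a, 0 < r a)
    (hsum : ∑ a, r a ≤ ∑ a, p a) : 0 ≤ discreteKL p r := by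
  rw [discreteKL_eq_sum_klFun fun a => (hr a).ne']
  have : 0 ≤ ∑ a, r a * klFun (p a / r a) := sum_nonneg fun a _ =>
    mul_nonneg (hr a).le (klFun_nonneg (div_nonneg (hp a) (hr a).le))
  linarith

lemma sq_sum_abs_sub_le_two_mul_discreteKL {p r : A → ℝ} (hp : ∀ a, 0 < p a)
    (hr : ∀ a, 0 < r a) (hp1 : ∑ a, p a = 1) (hr1 : ∑ a, r a = 1) :
    (∑ a, |p a - r a|) ^ 2 ≤ 2 * discreteKL p r := by
  set w : A → ℝ := fun a => (2 * p a + 4 * r a) / 3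
  have hw : ∀ a, 0 < w a := fun a => by have := hp a; have := hr a; positivity
  have hw2 : ∑ a, w a = 2 := by
    simp only [w, ← sum_div, sum_add_distrib, ← mul_sum, hp1, hr1]
    norm_num
  have hsedrakyan := sq_sum_div_le_sum_sq_div univ (fun a => |p a - r a|) fun a _ => hw a
  have hpointwise : ∀ a ∈ univ, |p a - r a| ^ 2 / w a ≤ r a * klFun (p a / r a) := by
    intro a _
    rw [sq_abs, div_le_iff₀ (hw a)]
    simp only [w]
    linarith [three_mul_sq_sub_le_mul_klFun (hp a) (hr a)]
  rw [hw2] at hsedrakyan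
  rw [discreteKL_eq_sum_klFun fun a => (hr a).ne', hp1, hr1]
  linarith [sum_le_sum hpointwise]

lemma sum_mul_log_nonpos {p : A → ℝ} (hp : ∀ a, 0 ≤ p a) (hp1 : ∑ a, p a = 1) :
    ∑ a, p a * log (p a) ≤ 0 :=
  sum_nonpos fun a _ =>
    mul_log_nonpos (hp a) (hp1 ▸ single_le_sum (fun b _ => hp b) (mem_univ a))

lemma sum_mul_log_le_sum_mul_log_self {p r : A → ℝ} (hp : ∀ a, 0 < p a) (hr : ∀ a, 0 < r a)
    (hsum : ∑ a, r a ≤ ∑ a, p a) : ∑ a, p a * log (r a) ≤ ∑ a, p a * log (p a) := by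
  calc ∑ a, p a * log (r a) = ∑ a, p a * log (p a) - discreteKL p r := by
        rw [discreteKL, ← sum_sub_distrib]
        refine sum_congr rfl fun a _ => ?_
        rw [log_div (hp a).ne' (hr a).ne']
        ring
    _ ≤ ∑ a, p a * log (p a) := sub_le_self _ (discreteKL_nonneg (fun a => (hp a).le) hr hsum)

end DiscreteKL

section Boltzmann

variable {A : Type*} [Fintype A] {q : A → ℝ} {τ : ℝ}

lemma boltzmann_pos (a : A) : 0 < boltzmann q τ a :=
  div_pos (exp_pos _) (sum_pos (fun _ _ => exp_pos _) ⟨a, mem_univ a⟩)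

lemma sum_boltzmann [Nonempty A] : ∑ a, boltzmann q τ a = 1 := by
  simp only [boltzmann, ← sum_div]
  exact div_self (sum_pos (fun _ _ => exp_pos _) univ_nonempty).ne'

lemma log_boltzmann (a : A) :
    log (boltzmann q τ a) = q a / τ - log (∑ b, exp (q b / τ)) := by
  rw [boltzmann, log_div (exp_pos _).ne'
    (sum_pos (fun _ _ => exp_pos _) ⟨a, mem_univ a⟩).ne', log_exp]

lemma sum_sub_mul_log_boltzmann_le [Nonempty A] {M : ℝ} (hτ : 0 < τ) (hM : ∀ a, |q a| ≤ M)
    {p : A → ℝ} (hp1 : ∑ a, p a = 1) :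
    ∑ a, (boltzmann q τ a - p a) * log (boltzmann q τ a)
      ≤ M / τ * ∑ a, |boltzmann q τ a - p a| := by
  calc ∑ a, (boltzmann q τ a - p a) * log (boltzmann q τ a)
      = ∑ a, (boltzmann q τ a - p a) * (q a / τ)
          - (∑ a, (boltzmann q τ a - p a)) * log (∑ b, exp (q b / τ)) := by
        rw [sum_mul, ← sum_sub_distrib]
        simp only [log_boltzmann, mul_sub]
    _ = ∑ a, (boltzmann q τ a - p a) * (q a / τ) := by
        rw [sum_sub_distrib, sum_boltzmann, hp1]; ring
    _ ≤ ∑ a, |boltzmann q τ a - p a| * (M / τ) := sum_le_sum fun a _ =>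
        (le_abs_self _).trans <| by
          rw [abs_mul, abs_div, abs_of_pos hτ]
          gcongr
          exact hM a
    _ = M / τ * ∑ a, |boltzmann q τ a - p a| := by rw [← sum_mul, mul_comm]

lemma discreteKL_boltzmann_le [Nonempty A] {M : ℝ} (hτ : 0 < τ)
    (hM : ∀ a, |q a| ≤ M) {p ρ : A → ℝ} (hp : ∀ a, 0 < p a) (hp1 : ∑ a, p a = 1)
    (hρ : ∀ a, 0 < ρ a) (hρ1 : ∑ a, ρ a = 1) :
    discreteKL p (boltzmann q τ)
      ≤ M / τ * √(2 * discreteKL (boltzmann q τ) p) - ∑ a, boltzmann q τ a * log (ρ a) := by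
  set B := boltzmann q τ
  have hB : ∀ a, 0 < B a := boltzmann_pos
  have hB1 : ∑ a, B a = 1 := sum_boltzmann
  have hsplit : discreteKL p B = ∑ a, p a * log (p a) - ∑ a, B a * log (B a)
      + ∑ a, (B a - p a) * log (B a) := by
    rw [discreteKL, ← sum_sub_distrib, ← sum_add_distrib]
    refine sum_congr rfl fun a _ => ?_
    rw [log_div (hp a).ne' (hB a).ne']
    ring
  have hentropy := sum_mul_log_nonpos (fun a => (hp a).le) hp1
  have hcross := sum_mul_log_le_sum_mul_log_self hB hρ (hρ1.trans hB1.symm).le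
  have hpinsker : ∑ a, |B a - p a| ≤ √(2 * discreteKL B p) :=
    le_sqrt_of_sq_le (sq_sum_abs_sub_le_two_mul_discreteKL hB hp hB1 hp1)
  have hM0 : 0 ≤ M / τ := div_nonneg ((abs_nonneg _).trans (hM (Classical.arbitrary A))) hτ.le
  have hholder := sum_sub_mul_log_boltzmann_le hτ hM hp1
  linarith [mul_le_mul_of_nonneg_left hpinsker hM0]

end Boltzmann

lemma div_mul_sqrt_le {M τ c x : ℝ} (hτ : 0 < τ) (hM : 0 ≤ M) (hc : 0 ≤ c)
    (h : x ≤ (τ / M * c) ^ 2) : M / τ * √x ≤ c := by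
  rcases hM.eq_or_lt with rfl | hM
  · simpa using hc
  calc M / τ * √x ≤ M / τ * (τ / M * c) := by
        gcongr
        exact (sqrt_le_sqrt h).trans_eq (sqrt_sq (by positivity))
    _ = c := by field_simp

theorem sufficient_fkl_reduction_bandits_general
    {A : Type*} [Fintype A] [Nonempty A]
    (τ : ℝ) (hτ : 0 < τ) (q : A → ℝ)
    (πold πnew : A → ℝ)
    (hπold : ∀ a, 0 < πold a) (hπold1 : ∑ a, πold a = 1)
    (hπnew : ∀ a, 0 < πnew a) (hπnew1 : ∑ a, πnew a = 1)
    (hpos : 0 ≤ (∑ a, πold a * Real.log (πold a / boltzmann q τ a))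
              + ∑ a, boltzmann q τ a * Real.log (πold a))
    (hRed : (∑ a, boltzmann q τ a * Real.log (boltzmann q τ a / πold a))
              - (∑ a, boltzmann q τ a * Real.log (boltzmann q τ a / πnew a))
          ≥ (∑ a, boltzmann q τ a * Real.log (boltzmann q τ a / πold a))
              - (1 / 2) *
                ((τ / (Finset.univ.sup' Finset.univ_nonempty fun a => |q a|)) *
                  ((∑ a, πold a * Real.log (πold a / boltzmann q τ a))
                    + ∑ a, boltzmann q τ a * Real.log (πold a))) ^ 2) :
    (∑ a, πnew a * Real.log (πnew a / boltzmann q τ a))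
      ≤ ∑ a, πold a * Real.log (πold a / boltzmann q τ a) := by
  set M := univ.sup' univ_nonempty fun a => |q a|
  have hM : ∀ a, |q a| ≤ M := fun a => le_sup' (fun a => |q a|) (mem_univ a)
  have hsqrt := div_mul_sqrt_le (x := 2 * discreteKL (boltzmann q τ) πnew) hτ
    ((abs_nonneg _).trans (hM (Classical.arbitrary A))) hpos (by unfold discreteKL; linarith)
  calc _ ≤ M / τ * √(2 * discreteKL (boltzmann q τ) πnew)
          - ∑ a, boltzmann q τ a * log (πold a) :=
        discreteKL_boltzmann_le hτ hM hπnew hπnew1 hπold hπold1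
    _ ≤ _ := by linarith

/-- Sufficient FKL reduction in bandits: with `B = B_τ q`, if
`KL(π_old‖B) + ∑ₐ B(a) log π_old(a) ≥ 0`, `FKL(π_new‖B) ≤ FKL(π_old‖B)`, and the FKL
reduction is at least
`FKL(π_old‖B) − (1/2)((τ/‖q‖_∞)(KL(π_old‖B) + ∑ₐ B(a) log π_old(a)))²`,
then `KL(π_new‖B) ≤ KL(π_old‖B)`. -/
theorem sufficient_fkl_reduction_bandits
    {A : Type*} [Fintype A] [Nonempty A]
    (τ : ℝ) (hτ : 0 < τ) (q : A → ℝ)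
    (πold πnew : A → ℝ)
    (hπold : ∀ a, 0 < πold a) (hπold1 : ∑ a, πold a = 1)
    (hπnew : ∀ a, 0 < πnew a) (hπnew1 : ∑ a, πnew a = 1)
    (hpos : 0 ≤ (∑ a, πold a * Real.log (πold a / boltzmann q τ a))
              + ∑ a, boltzmann q τ a * Real.log (πold a))
    (hFKLle : (∑ a, boltzmann q τ a * Real.log (boltzmann q τ a / πnew a))
            ≤ ∑ a, boltzmann q τ a * Real.log (boltzmann q τ a / πold a))
    (hRed : (∑ a, boltzmann q τ a * Real.log (boltzmann q τ a / πold a))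
              - (∑ a, boltzmann q τ a * Real.log (boltzmann q τ a / πnew a))
          ≥ (∑ a, boltzmann q τ a * Real.log (boltzmann q τ a / πold a))
              - (1 / 2) *
                ((τ / (Finset.univ.sup' Finset.univ_nonempty fun a => |q a|)) *
                  ((∑ a, πold a * Real.log (πold a / boltzmann q τ a))
                    + ∑ a, boltzmann q τ a * Real.log (πold a))) ^ 2) :
    (∑ a, πnew a * Real.log (πnew a / boltzmann q τ a))
      ≤ ∑ a, πold a * Real.log (πold a / boltzmann q τ a) :=
  sufficient_fkl_reduction_bandits_general τ hτ q πold πnew hπold hπold1 hπnew hπnew1 hpos hRed
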